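/- arXiv:1512.00184 — 4 statements merged into one kernel-verified Lean document; each statement's English description precedes it below -/
import Mathlib

section
/- Upper bound on the connection angle: for 0 ≤ r ≤ R and y ≥ R − r with y ≤ R, the angle θ_r(y) = arccos((cosh y cosh r − cosh R)/(sinh y sinh r)) satisfies θ_r(y) ≤ C e^{(R − r − y)/2} for an absolute constant C (e.g. C = 10), provided r, y ≥ 1. -/
open Real

lemma arccos_le_pi_mul_sqrt (x : ℝ) (hx : -1 ≤ x) (hx1 : x ≤ 1) :
    Real.arccos x ≤ π * Real.sqrt ((1 - x) / 2) := by
  set θ := Real.arccos x with hθ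
  have h0 : 0 ≤ θ := Real.arccos_nonneg x
  have hπ : θ ≤ π := Real.arccos_le_pi x
  have hcos : Real.cos θ = x := Real.cos_arccos hx hx1
  have hb : Real.cos θ ≤ 1 - 2 / π ^ 2 * θ ^ 2 :=
    Real.cos_le_one_sub_mul_cos_sq (by rwa [abs_of_nonneg h0])
  have hπ0 : (0:ℝ) < π := Real.pi_pos
  have hsq : θ ^ 2 ≤ π ^ 2 * ((1 - x) / 2) := by
    rw [hcos] at hb
    have h2 : 2 / π ^ 2 * θ ^ 2 ≤ 1 - x := by linarith
    have := mul_le_mul_of_nonneg_left h2 (le_of_lt (by positivity : (0:ℝ) < π ^ 2 / 2))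
    calc θ ^ 2 = π ^ 2 / 2 * (2 / π ^ 2 * θ ^ 2) := by field_simp
    _ ≤ π ^ 2 / 2 * (1 - x) := this
    _ = π ^ 2 * ((1 - x) / 2) := by ring
  have : θ ≤ Real.sqrt (π ^ 2 * ((1 - x) / 2)) := by
    rw [← Real.sqrt_sq h0]
    exact Real.sqrt_le_sqrt hsq
  calc θ ≤ Real.sqrt (π ^ 2 * ((1 - x) / 2)) := this
  _ = π * Real.sqrt ((1 - x) / 2) := by
      rw [Real.sqrt_mul (by positivity), Real.sqrt_sq hπ0.le]

lemma exp_div_four_le_sinh {t : ℝ} (ht : 1 ≤ t) : Real.exp t / 4 ≤ Real.sinh t := by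
  rw [Real.sinh_eq]
  have h1 : Real.exp (-t) ≤ Real.exp t / 2 := by
    have ha : Real.exp (-t) ≤ 1 := Real.exp_le_one_iff.2 (by linarith)
    have hb : (2:ℝ) ≤ Real.exp t := by
      calc (2:ℝ) ≤ Real.exp 1 := by
            have := Real.add_one_le_exp (1:ℝ); linarith
      _ ≤ Real.exp t := Real.exp_le_exp.2 ht
    linarith
  linarith

/-- Upper bound on the connection angle: for `1 ≤ r ≤ R`, `1 ≤ y ≤ R` with
`y ≥ R − r`, the maximal connection angle satisfies
`θ_r(y) ≤ 10 e^{(R − r − y)/2}`. -/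
theorem connection_angle_upper (R r y : ℝ)
    (hr1 : 1 ≤ r) (hrR : r ≤ R) (hy1 : 1 ≤ y) (hyR : y ≤ R) (hsum : R - r ≤ y) :
    Real.arccos
        ((Real.cosh y * Real.cosh r - Real.cosh R) / (Real.sinh y * Real.sinh r)) ≤
      10 * Real.exp ((R - r - y) / 2) := by
  have hsy : 0 < Real.sinh y := Real.sinh_pos_iff.2 (by linarith)
  have hsr : 0 < Real.sinh r := Real.sinh_pos_iff.2 (by linarith)
  have hD : 0 < Real.sinh y * Real.sinh r := mul_pos hsy hsr
  set A : ℝ := (Real.cosh y * Real.cosh r - Real.cosh R) / (Real.sinh y * Real.sinh r) with hA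
  have hcosh_add : Real.cosh R ≤ Real.cosh (y + r) := by
    rw [Real.cosh_le_cosh, abs_of_nonneg (by linarith : (0:ℝ) ≤ R),
      abs_of_nonneg (by linarith : (0:ℝ) ≤ y + r)]
    linarith
  have hA1 : -1 ≤ A := by
    rw [hA, le_div_iff₀ hD]
    have := Real.cosh_add y r
    nlinarith [this]
  have hcosh_sub : Real.cosh (y - r) ≤ Real.cosh R := by
    rw [Real.cosh_le_cosh, abs_of_nonneg (by linarith : (0:ℝ) ≤ R), abs_le]
    constructor <;> linarith
  have hA2 : A ≤ 1 := by
    rw [hA, div_le_one hD]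
    have := Real.cosh_sub y r
    nlinarith [this]
  have key := arccos_le_pi_mul_sqrt A hA1 hA2
  have h1A : (1 - A) / 2 ≤ 8 * Real.exp (R - r - y) := by
    have hnum : Real.cosh y * Real.cosh r - Real.sinh y * Real.sinh r
        = Real.cosh (y - r) := (Real.cosh_sub y r).symm
    have h1 : 1 - A = (Real.cosh R - Real.cosh (y - r)) / (Real.sinh y * Real.sinh r) := by
      rw [hA]
      field_simp
      linarith [hnum]
    have hcexp : Real.cosh R ≤ Real.exp R := by
      rw [Real.cosh_eq]
      have h := Real.exp_le_exp.2 (by linarith : -R ≤ R)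
      linarith
    have hden : Real.exp y / 4 * (Real.exp r / 4) ≤ Real.sinh y * Real.sinh r :=
      mul_le_mul (exp_div_four_le_sinh hy1) (exp_div_four_le_sinh hr1)
        (by positivity) hsy.le
    have hcpos : (0:ℝ) < Real.cosh (y - r) := Real.cosh_pos _
    have h2 : 1 - A ≤ Real.cosh R / (Real.sinh y * Real.sinh r) := by
      rw [h1]
      gcongr
      linarith
    have h3 : Real.cosh R / (Real.sinh y * Real.sinh r)
        ≤ Real.exp R / (Real.exp y / 4 * (Real.exp r / 4)) :=
      div_le_div₀ (Real.exp_pos R).le hcexp (by positivity) hden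
    have h4 : Real.exp R / (Real.exp y / 4 * (Real.exp r / 4))
        = 16 * Real.exp (R - r - y) := by
      rw [show R - r - y = R - (y + r) by ring, Real.exp_sub, Real.exp_add]
      field_simp
      ring
    linarith
  have hs8 : Real.sqrt ((1 - A) / 2) ≤ 3 * Real.exp ((R - r - y) / 2) := by
    calc Real.sqrt ((1 - A) / 2) ≤ Real.sqrt (8 * Real.exp (R - r - y)) :=
        Real.sqrt_le_sqrt h1A
    _ = Real.sqrt 8 * Real.sqrt (Real.exp (R - r - y)) :=
        Real.sqrt_mul (by norm_num) _
    _ = Real.sqrt 8 * Real.exp ((R - r - y) / 2) := by rw [Real.exp_half]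
    _ ≤ 3 * Real.exp ((R - r - y) / 2) := by
        gcongr
        rw [show (3:ℝ) = Real.sqrt 9 by
          rw [show (9:ℝ) = 3 ^ 2 by norm_num, Real.sqrt_sq]; norm_num]
        exact Real.sqrt_le_sqrt (by norm_num)
  have hexp : 0 < Real.exp ((R - r - y) / 2) := Real.exp_pos _
  calc Real.arccos A ≤ π * Real.sqrt ((1 - A) / 2) := key
  _ ≤ π * (3 * Real.exp ((R - r - y) / 2)) := by
      have := Real.pi_pos
      nlinarith [hs8, Real.sqrt_nonneg ((1 - A) / 2)]
  _ ≤ 10 * Real.exp ((R - r - y) / 2) := by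
      have hπ : π < 3.15 := Real.pi_lt_d2
      nlinarith
end

section
/- Lower bound on the connection angle: there exist constants c > 0 and t₀ such that for all r, y ≥ t₀ with R − r − y ≤ −t₀ and r, y ≤ R, the angle θ_r(y) = arccos((cosh y cosh r − cosh R)/(sinh y sinh r)) satisfies θ_r(y) ≥ c·e^{(R − r − y)/2}. -/
open Real

lemma antitone_arccos' : Antitone Real.arccos := by
  intro a b h
  rw [Real.arccos_eq_pi_div_two_sub_arcsin, Real.arccos_eq_pi_div_two_sub_arcsin]
  exact sub_le_sub_left (Real.monotone_arcsin h) _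

lemma cosh_le_exp_abs (t : ℝ) : Real.cosh t ≤ Real.exp |t| := by
  rw [Real.cosh_eq]
  have h1 : Real.exp t ≤ Real.exp |t| := Real.exp_le_exp.2 (le_abs_self t)
  have h2 : Real.exp (-t) ≤ Real.exp |t| := Real.exp_le_exp.2 (neg_le_abs t)
  linarith

lemma sinh_le_exp_half (t : ℝ) : Real.sinh t ≤ Real.exp t / 2 := by
  rw [Real.sinh_eq]
  have := Real.exp_pos (-t)
  linarith

lemma exp_half_le_cosh (t : ℝ) : Real.exp t / 2 ≤ Real.cosh t := by
  rw [Real.cosh_eq]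
  have := Real.exp_pos (-t)
  linarith

/-- Lower bound on the connection angle: there are constants `c > 0` and `t₀`
such that for all `r, y ≥ t₀` with `R − r − y ≤ −t₀` and `r, y ≤ R`,
`θ_r(y) ≥ c e^{(R − r − y)/2}`. -/
theorem connection_angle_lower :
    ∃ c : ℝ, 0 < c ∧ ∃ t₀ : ℝ, ∀ R r y : ℝ,
      t₀ ≤ r → t₀ ≤ y → R - r - y ≤ -t₀ → r ≤ R → y ≤ R →
      c * Real.exp ((R - r - y) / 2) ≤
        Real.arccos
          ((Real.cosh y * Real.cosh r - Real.cosh R) / (Real.sinh y * Real.sinh r)) := by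
  refine ⟨1, one_pos, 2, fun R r y hr hy hRry hrR hyR => ?_⟩
  have hR2 : (2:ℝ) ≤ R := le_trans hr hrR
  set D : ℝ := Real.sinh y * Real.sinh r with hD
  have hDpos : 0 < D :=
    mul_pos (Real.sinh_pos_iff.2 (by linarith)) (Real.sinh_pos_iff.2 (by linarith))
  set x : ℝ := (Real.cosh R - Real.cosh (y - r)) / D with hxdef
  have hx_eq : (Real.cosh y * Real.cosh r - Real.cosh R) / D = 1 - x := by
    rw [hxdef, Real.cosh_sub]
    field_simp
    ring
  -- numerator lower bound
  have hexp2 : (4:ℝ) ≤ Real.exp 2 := by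
    have h1 : (2:ℝ) ≤ Real.exp 1 := by
      have := Real.exp_one_gt_d9; linarith
    have : Real.exp 2 = Real.exp 1 * Real.exp 1 := by
      rw [← Real.exp_add]; norm_num
    nlinarith [Real.exp_pos 1]
  have habs : |y - r| ≤ R - 2 := abs_le.2 ⟨by linarith, by linarith⟩
  have hcosh_sub : Real.cosh (y - r) ≤ Real.exp (R - 2) :=
    le_trans (cosh_le_exp_abs _) (Real.exp_le_exp.2 habs)
  have hexpR2 : Real.exp (R - 2) ≤ Real.exp R / 4 := by
    rw [Real.exp_sub, div_le_div_iff₀ (Real.exp_pos 2) (by norm_num)]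
    nlinarith [Real.exp_pos R]
  have hnum_lb : Real.exp R / 4 ≤ Real.cosh R - Real.cosh (y - r) := by
    have := exp_half_le_cosh R
    linarith
  have hnum_pos : 0 < Real.cosh R - Real.cosh (y - r) :=
    lt_of_lt_of_le (by positivity) hnum_lb
  -- denominator upper bound
  have hD_ub : D ≤ Real.exp (y + r) / 4 := by
    have h1 := sinh_le_exp_half y
    have h2 := sinh_le_exp_half r
    have h3 : 0 ≤ Real.sinh y := (Real.sinh_pos_iff.2 (by linarith)).le
    have h4 : 0 ≤ Real.sinh r := (Real.sinh_pos_iff.2 (by linarith)).le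
    calc D ≤ (Real.exp y / 2) * (Real.exp r / 2) :=
          mul_le_mul h1 h2 h4 (by positivity)
      _ = Real.exp (y + r) / 4 := by rw [Real.exp_add]; ring
  -- lower bound on x
  have hx_lb : Real.exp (R - r - y) ≤ x := by
    have h := div_le_div₀ hnum_pos.le hnum_lb hDpos hD_ub
    have heq : (Real.exp R / 4) / (Real.exp (y + r) / 4) = Real.exp (R - r - y) := by
      rw [div_div_div_comm, div_self (by norm_num : (4:ℝ) ≠ 0), div_one, ← Real.exp_sub]
      ring_nf
    linarith [h, heq.ge, heq.le]
  have hx_pos : 0 < x := lt_of_lt_of_le (Real.exp_pos _) hx_lb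
  -- upper bound on x
  have hx_ub : x ≤ 2 := by
    have hcoshR : Real.cosh R ≤ Real.cosh (y + r) := by
      rw [Real.cosh_le_cosh]
      rw [abs_of_nonneg (by linarith : (0:ℝ) ≤ R), abs_of_nonneg (by linarith : (0:ℝ) ≤ y + r)]
      linarith
    rw [hxdef, div_le_iff₀ hDpos]
    rw [Real.cosh_add] at hcoshR
    rw [Real.cosh_sub]
    linarith
  -- the key angle bound via cosine
  set s : ℝ := Real.sqrt (2 * x) with hs
  have hs_nonneg : 0 ≤ s := Real.sqrt_nonneg _
  have hs_sq : s ^ 2 = 2 * x := Real.sq_sqrt (by linarith)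
  have hs_pi : s ≤ π := by
    have h4 : s ≤ 2 := by
      calc s ≤ Real.sqrt 4 := Real.sqrt_le_sqrt (by linarith)
        _ = 2 := by
          rw [show (4:ℝ) = 2^2 by norm_num, Real.sqrt_sq (by norm_num : (0:ℝ) ≤ 2)]
    linarith [Real.pi_gt_three]
  have hcos : 1 - x ≤ Real.cos s := by
    have := Real.one_sub_sq_div_two_le_cos (x := s)
    rw [hs_sq] at this
    linarith
  have harccos : s ≤ Real.arccos (1 - x) := by
    calc s = Real.arccos (Real.cos s) := (Real.arccos_cos hs_nonneg hs_pi).symm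
      _ ≤ Real.arccos (1 - x) := antitone_arccos' hcos
  -- conclude
  have hfinal : Real.exp ((R - r - y) / 2) ≤ s := by
    have h1 : Real.exp ((R - r - y) / 2) = Real.sqrt (Real.exp (R - r - y)) := by
      rw [show Real.exp (R - r - y) = Real.exp ((R-r-y)/2) * Real.exp ((R-r-y)/2) by
        rw [← Real.exp_add]; ring_nf]
      rw [Real.sqrt_mul_self (Real.exp_pos _).le]
    rw [h1]
    exact Real.sqrt_le_sqrt (by linarith)
  rw [hx_eq, one_mul]
  linarith
end

section
/- Let 0 < ε < 1/2 and let R be large enough that εR ≥ 1. If two points u, v in the hyperbolic plane have radial coordinates r_u, r_v ≥ εR and hyperbolic distance d(u,v) ≤ R, then their relative angle satisfies Δφ_{u,v} ≤ 10 e^{(R − r_u − r_v)/2} ≤ 10 e^{(1 − 2ε)R/2}. -/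
/-- The inverse of `cosh` on `[1, ∞)`. -/
noncomputable def arcosh (x : ℝ) : ℝ := Real.log (x + Real.sqrt (x ^ 2 - 1))

/-- The hyperbolic distance between points with radial coordinates `r₁, r₂`
and relative angle `Δφ` in the native representation. -/
noncomputable def hypDist (r₁ r₂ Δφ : ℝ) : ℝ :=
  arcosh (Real.cosh r₁ * Real.cosh r₂ - Real.sinh r₁ * Real.sinh r₂ * Real.cos Δφ)

/-- Lower bound for `sinh` on `[1, ∞)`. -/
lemma sinh_lower {r : ℝ} (hr : 1 ≤ r) : 3 / 8 * Real.exp r ≤ Real.sinh r := by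
  have h2 : (4:ℝ) ≤ Real.exp 2 := by
    have h1 : (2:ℝ) ≤ Real.exp 1 := by
      have := Real.add_one_le_exp (1:ℝ)
      linarith
    calc (4:ℝ) = 2 * 2 := by norm_num
    _ ≤ Real.exp 1 * Real.exp 1 := by
        apply mul_le_mul h1 h1 (by norm_num) (Real.exp_nonneg 1)
    _ = Real.exp 2 := by rw [← Real.exp_add]; norm_num
  have hneg : Real.exp (-r) ≤ 1 / 4 * Real.exp r := by
    have h : Real.exp (-r) * Real.exp r = 1 := by
      rw [← Real.exp_add]; simp
    have hx : Real.exp 2 ≤ Real.exp r * Real.exp r := by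
      rw [← Real.exp_add]; exact Real.exp_le_exp.mpr (by linarith)
    have hp := Real.exp_pos r
    have hp2 := Real.exp_pos (-r)
    nlinarith
  rw [Real.sinh_eq]
  linarith

/-- If two adjacent points both have radial coordinate at least `εR ≥ 1`
(with `0 < ε < 1/2`), then their relative angle satisfies
`Δφ ≤ 10 e^{(R − r_u − r_v)/2} ≤ 10 e^{(1 − 2ε)R/2}`. -/
theorem angle_of_adjacent_outer_points (R ε r_u r_v Δφ : ℝ)
    (hε0 : 0 < ε) (hε : ε < 1 / 2) (hεR : 1 ≤ ε * R)
    (hru : ε * R ≤ r_u) (hrv : ε * R ≤ r_v)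
    (hφ0 : 0 ≤ Δφ) (hφπ : Δφ ≤ Real.pi)
    (hconn : hypDist r_u r_v Δφ ≤ R) :
    Δφ ≤ 10 * Real.exp ((R - r_u - r_v) / 2) ∧
      10 * Real.exp ((R - r_u - r_v) / 2) ≤ 10 * Real.exp ((1 - 2 * ε) * R / 2) := by
  have hru1 : 1 ≤ r_u := le_trans hεR hru
  have hrv1 : 1 ≤ r_v := le_trans hεR hrv
  constructor
  · set X := Real.cosh r_u * Real.cosh r_v - Real.sinh r_u * Real.sinh r_v * Real.cos Δφ with hXdef
    -- X ≥ cosh (r_u - r_v) ≥ 1 plus angle term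
    have hsinhu : 3 / 8 * Real.exp r_u ≤ Real.sinh r_u := sinh_lower hru1
    have hsinhv : 3 / 8 * Real.exp r_v ≤ Real.sinh r_v := sinh_lower hrv1
    have hsu0 : 0 ≤ Real.sinh r_u := le_trans (by positivity) hsinhu
    have hsv0 : 0 ≤ Real.sinh r_v := le_trans (by positivity) hsinhv
    have hcos : Real.cos Δφ ≤ 1 - 2 / Real.pi ^ 2 * Δφ ^ 2 :=
      Real.cos_le_one_sub_mul_cos_sq (by rw [abs_of_nonneg hφ0]; exact hφπ)
    have hXge : Real.cosh (r_u - r_v) +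
        Real.sinh r_u * Real.sinh r_v * (2 / Real.pi ^ 2 * Δφ ^ 2) ≤ X := by
      rw [hXdef, Real.cosh_sub]
      have : Real.sinh r_u * Real.sinh r_v * Real.cos Δφ ≤
          Real.sinh r_u * Real.sinh r_v * (1 - 2 / Real.pi ^ 2 * Δφ ^ 2) := by
        apply mul_le_mul_of_nonneg_left hcos (by positivity)
      ring_nf
      ring_nf at this
      linarith
    have hX1 : (1:ℝ) ≤ X := by
      have h1 : (1:ℝ) ≤ Real.cosh (r_u - r_v) := Real.one_le_cosh _
      have h2 : 0 ≤ Real.sinh r_u * Real.sinh r_v * (2 / Real.pi ^ 2 * Δφ ^ 2) := by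
        have := Real.pi_pos; positivity
      linarith
    -- from the distance bound, X ≤ exp R
    have hXle : X ≤ Real.exp R := by
      have hsq : 0 ≤ Real.sqrt (X ^ 2 - 1) := Real.sqrt_nonneg _
      have hpos : 0 < X + Real.sqrt (X ^ 2 - 1) := by linarith
      have hlog : Real.log (X + Real.sqrt (X ^ 2 - 1)) ≤ R := hconn
      have := (Real.log_le_iff_le_exp hpos).mp hlog
      linarith
    -- combine
    have hchain : Real.sinh r_u * Real.sinh r_v * (2 / Real.pi ^ 2 * Δφ ^ 2)
        ≤ Real.exp R := by
      have h1 : (1:ℝ) ≤ Real.cosh (r_u - r_v) := Real.one_le_cosh _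
      linarith
    set E := Real.exp ((R - r_u - r_v) / 2) with hEdef
    have hE0 : 0 < E := Real.exp_pos _
    have hEsq : E * E * (Real.exp r_u * Real.exp r_v) = Real.exp R := by
      rw [hEdef, ← Real.exp_add, ← Real.exp_add, ← Real.exp_add]; ring_nf
    have hpi : Real.pi ≤ 4 := Real.pi_le_four
    have hpi0 : 0 < Real.pi := Real.pi_pos
    -- key: (3/8)² * exp(r_u+r_v) * (2/π²) Δφ² ≤ exp R
    have hkey : 3 / 8 * Real.exp r_u * (3 / 8 * Real.exp r_v) * (2 / Real.pi ^ 2 * Δφ ^ 2)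
        ≤ E * E * (Real.exp r_u * Real.exp r_v) := by
      rw [hEsq]
      refine le_trans ?_ hchain
      apply mul_le_mul_of_nonneg_right _ (by positivity)
      exact mul_le_mul hsinhu hsinhv (by positivity) hsu0
    have heu := Real.exp_pos r_u
    have hev := Real.exp_pos r_v
    -- conclude Δφ ≤ 10 E
    have hA : (9 / 64 * (2 / Real.pi ^ 2 * Δφ ^ 2)) * (Real.exp r_u * Real.exp r_v)
        ≤ (E * E) * (Real.exp r_u * Real.exp r_v) := by
      calc (9 / 64 * (2 / Real.pi ^ 2 * Δφ ^ 2)) * (Real.exp r_u * Real.exp r_v)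
          = 3 / 8 * Real.exp r_u * (3 / 8 * Real.exp r_v) * (2 / Real.pi ^ 2 * Δφ ^ 2) := by
            ring
        _ ≤ E * E * (Real.exp r_u * Real.exp r_v) := hkey
    have h1 : 9 / 64 * (2 / Real.pi ^ 2 * Δφ ^ 2) ≤ E * E :=
      le_of_mul_le_mul_right hA (by positivity)
    have hpien : Real.pi ^ 2 ≤ 16 := by nlinarith
    have hpi2 : (2:ℝ) / 16 ≤ 2 / Real.pi ^ 2 :=
      div_le_div_of_nonneg_left (by norm_num) (by positivity) hpien
    have h2 : 9 / 64 * (2 / 16 * Δφ ^ 2) ≤ 9 / 64 * (2 / Real.pi ^ 2 * Δφ ^ 2) := by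
      have := mul_le_mul_of_nonneg_right hpi2 (sq_nonneg Δφ)
      linarith
    have hsq : Δφ ^ 2 ≤ (10 * E) ^ 2 := by
      have h100 : (10 * E) ^ 2 = 100 * (E * E) := by ring
      have hEE : 0 ≤ E * E := mul_self_nonneg E
      rw [h100]; linarith
    have hs := Real.sqrt_le_sqrt hsq
    rwa [Real.sqrt_sq hφ0, Real.sqrt_sq (by positivity)] at hs
  · have h : R - r_u - r_v ≤ (1 - 2 * ε) * R := by nlinarith
    have := Real.exp_le_exp.mpr (by linarith : (R - r_u - r_v) / 2 ≤ (1 - 2 * ε) * R / 2)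
    linarith
end

section
/- If in a cyclic arrangement of N sectors every window of k consecutive sectors contains at least one 'anchor' node, and every edge of a path in the graph spans fewer than s sectors in angle (with s ≤ k), and all anchors are adjacent to a common hub once reached (formally: any path vertex lying in the same window as an anchor and satisfying the passing-under condition connects to the anchor), then any path in the graph that avoids all anchors visits at most k + s sectors; if additionally each sector contains at most M nodes, such a path has length at most M(k + s). -/
/-- Combinatorial core of the polylogarithmic diameter upper bound: with `N`
sectors arranged cyclically, suppose every window of `k` consecutive sectors
contains an anchor sector (`A`).  If a path avoids all anchor sectors and each
of its edges moves fewer than `s ≤ k` sectors without crossing an anchor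
sector, then the path visits at most `k + s` sectors; if moreover every sector
contains at most `M` nodes, the path has at most `M (k + s)` vertices. -/
theorem anchor_free_path_bound (N k s M : ℕ) (hN : 0 < N) (hsk : s ≤ k)
    (V : Type*) [Fintype V] (sec : V → ZMod N) (A : Set (ZMod N))
    (hwin : ∀ i : ZMod N, ∃ j : ℕ, j < k ∧ (i + (j : ZMod N)) ∈ A)
    (m : ℕ) (p : Fin (m + 1) → V) (hinj : Function.Injective p)
    (havoid : ∀ t : Fin (m + 1), sec (p t) ∉ A)
    (hstep : ∀ t : Fin m, ∃ d : ℕ, d < s ∧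
      ((sec (p t.succ) = sec (p t.castSucc) + (d : ZMod N) ∧
          ∀ e : ℕ, e ≤ d → sec (p t.castSucc) + (e : ZMod N) ∉ A) ∨
       (sec (p t.castSucc) = sec (p t.succ) + (d : ZMod N) ∧
          ∀ e : ℕ, e ≤ d → sec (p t.succ) + (e : ZMod N) ∉ A)))
    (hM : ∀ c : ZMod N, Fintype.card {v : V // sec v = c} ≤ M) :
    (Finset.univ.image fun t : Fin (m + 1) => sec (p t)).card ≤ k + s ∧
      m + 1 ≤ M * (k + s) := by
  classical
  obtain ⟨j0, hj0k, _⟩ := hwin 0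
  have hk : 0 < k := lt_of_le_of_lt (Nat.zero_le _) hj0k
  -- nearest anchor behind each sector
  have hne : ∀ c : ZMod N, ∃ e : ℕ, e < k ∧ c - (e : ZMod N) ∈ A := by
    intro c
    obtain ⟨j, hj, hA⟩ := hwin (c - ((k - 1 : ℕ) : ZMod N))
    have hjle : j ≤ k - 1 := Nat.le_sub_one_of_lt hj
    refine ⟨k - 1 - j, lt_of_le_of_lt (Nat.sub_le _ _) (Nat.sub_lt hk one_pos), ?_⟩
    have hcast : ((k - 1 - j : ℕ) : ZMod N) = ((k - 1 : ℕ) : ZMod N) - (j : ZMod N) :=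
      Nat.cast_sub hjle
    rw [hcast]
    have : c - (((k - 1 : ℕ) : ZMod N) - (j : ZMod N)) =
        c - ((k - 1 : ℕ) : ZMod N) + (j : ZMod N) := by ring
    rw [this]; exact hA
  set g : ZMod N → ℕ := fun c => sInf {e : ℕ | c - (e : ZMod N) ∈ A} with hgdef
  have hSne : ∀ c : ZMod N, {e : ℕ | c - (e : ZMod N) ∈ A}.Nonempty := by
    intro c; obtain ⟨e, _, he⟩ := hne c; exact ⟨e, he⟩
  have hmem : ∀ c : ZMod N, c - (g c : ZMod N) ∈ A := fun c => Nat.sInf_mem (hSne c)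
  have hmin : ∀ c : ZMod N, ∀ e : ℕ, e < g c → c - (e : ZMod N) ∉ A := by
    intro c e he
    exact Nat.notMem_of_lt_sInf he
  have hlt : ∀ c : ZMod N, g c < k := by
    intro c
    obtain ⟨e, hek, he⟩ := hne c
    exact lt_of_le_of_lt (Nat.sInf_le he) hek
  -- step lemma
  have hstep' : ∀ (c : ZMod N) (d : ℕ), (∀ e : ℕ, e ≤ d → c + (e : ZMod N) ∉ A) →
      g (c + (d : ZMod N)) = g c + d := by
    intro c d hno
    have hmem' : (c + (d : ZMod N)) - ((g c + d : ℕ) : ZMod N) ∈ A := by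
      have : (c + (d : ZMod N)) - ((g c + d : ℕ) : ZMod N) = c - (g c : ZMod N) := by
        push_cast; ring
      rw [this]; exact hmem c
    have hnot : ∀ e : ℕ, e < g c + d → (c + (d : ZMod N)) - (e : ZMod N) ∉ A := by
      intro e he
      by_cases hed : e ≤ d
      · have : (c + (d : ZMod N)) - (e : ZMod N) = c + ((d - e : ℕ) : ZMod N) := by
          rw [Nat.cast_sub hed]; ring
        rw [this]; exact hno _ (Nat.sub_le _ _)
      · push_neg at hed
        have h1 : e - d < g c := by omega
        have : (c + (d : ZMod N)) - (e : ZMod N) = c - ((e - d : ℕ) : ZMod N) := by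
          rw [Nat.cast_sub (le_of_lt hed)]; ring
        rw [this]; exact hmin c _ h1
    refine le_antisymm (Nat.sInf_le hmem') ?_
    by_contra hcon
    push_neg at hcon
    exact hnot _ hcon (Nat.sInf_mem (hSne _))
  -- invariant along the path
  have hinv : ∀ t : Fin (m + 1),
      sec (p t) - (g (sec (p t)) : ZMod N) = sec (p 0) - (g (sec (p 0)) : ZMod N) := by
    intro t
    induction t using Fin.induction with
    | zero => rfl
    | succ i ih =>
      obtain ⟨d, _, hcase | hcase⟩ := hstep i
      · rw [hcase.1, hstep' _ d hcase.2, ← ih]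
        push_cast; ring
      · rw [hcase.1, hstep' _ d hcase.2] at ih
        rw [← ih]; push_cast; ring
  -- all visited sectors lie in an arc of length k
  have hsub : (Finset.univ.image fun t : Fin (m + 1) => sec (p t)) ⊆
      (Finset.range k).image
        (fun j : ℕ => (sec (p 0) - (g (sec (p 0)) : ZMod N)) + (j : ZMod N)) := by
    intro c hc
    simp only [Finset.mem_image, Finset.mem_univ, true_and, Finset.mem_range] at hc ⊢
    obtain ⟨t, rfl⟩ := hc
    refine ⟨g (sec (p t)), hlt _, ?_⟩
    rw [← hinv t]; ring
  have hcard1 : (Finset.univ.image fun t : Fin (m + 1) => sec (p t)).card ≤ k + s := by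
    calc (Finset.univ.image fun t : Fin (m + 1) => sec (p t)).card
        ≤ _ := Finset.card_le_card hsub
      _ ≤ (Finset.range k).card := Finset.card_image_le
      _ = k := Finset.card_range k
      _ ≤ k + s := Nat.le_add_right _ _
  refine ⟨hcard1, ?_⟩
  -- counting vertices
  set S := Finset.univ.image fun t : Fin (m + 1) => sec (p t) with hS
  have h1 : (Finset.univ.image p).card = m + 1 := by
    rw [Finset.card_image_of_injective _ hinj, Finset.card_univ, Fintype.card_fin]
  have hsub2 : Finset.univ.image p ⊆
      S.biUnion (fun c => Finset.univ.filter (fun v => sec v = c)) := by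
    intro v hv
    simp only [Finset.mem_image, Finset.mem_univ, true_and] at hv
    obtain ⟨t, rfl⟩ := hv
    refine Finset.mem_biUnion.2 ⟨sec (p t), ?_, by simp⟩
    rw [hS]
    exact Finset.mem_image.2 ⟨t, Finset.mem_univ _, rfl⟩
  have hfil : ∀ c : ZMod N, (Finset.univ.filter (fun v => sec v = c)).card ≤ M := by
    intro c
    have := hM c
    rwa [Fintype.card_subtype] at this
  calc m + 1 = (Finset.univ.image p).card := h1.symm
    _ ≤ (S.biUnion (fun c => Finset.univ.filter (fun v => sec v = c))).card :=
        Finset.card_le_card hsub2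
    _ ≤ ∑ c ∈ S, (Finset.univ.filter (fun v => sec v = c)).card :=
        Finset.card_biUnion_le
    _ ≤ ∑ _c ∈ S, M := Finset.sum_le_sum (fun c _ => hfil c)
    _ = S.card * M := by rw [Finset.sum_const, smul_eq_mul]
    _ ≤ (k + s) * M := Nat.mul_le_mul_right _ hcard1
    _ = M * (k + s) := Nat.mul_comm _ _
end
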